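/- Let S be a standard Borel space, let 𝓡 : S → P(M±(S)) be a probability kernel into the probability measures on finite signed measures on S, and let M₀ be a measurable subset of M*(S) such that for every μ ∈ M₀ and μ-almost every s ∈ S, 𝓡_s({ν ∈ M±(S) : μ + ν ∈ M₀}) = 1 (these sets are measurable since S is standard Borel). For μ ∈ M₀, define R_μ ∈ P(M₀) as the mixture over s ∼ μ/μ(S) of the pushforwards of 𝓡_s under ν ↦ μ + ν. Then μ ↦ R_μ is a probability kernel from M₀ to itself. -/

import Mathlib

open MeasureTheory

/-- The σ-algebra on the space `M±(S)` of finite signed measures on `S`,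
generated by the evaluation maps `μ ↦ μ B` over measurable sets `B`. -/
instance signedMeasureMeasurableSpace (S : Type*) [MeasurableSpace S] :
    MeasurableSpace (SignedMeasure S) :=
  ⨆ (B : Set S) (_ : MeasurableSet B),
    MeasurableSpace.comap (fun μ : SignedMeasure S => μ B) inferInstance

/-- The (nonnegative) measure associated to a signed measure `μ`: its positive
part. For `0 ≤ μ` this is just `μ` viewed as a measure. -/
noncomputable def posOf {S : Type*} [MeasurableSpace S] (μ : SignedMeasure S) :
    Measure S :=
  μ.toJordanDecomposition.posPart

/-- The normalized measure `μ / μ(S)` associated to a nonnegative signed measure. -/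
noncomputable def drawDist {S : Type*} [MeasurableSpace S] (μ : SignedMeasure S) :
    Measure S :=
  ((posOf μ) Set.univ)⁻¹ • posOf μ

/-!
The urn step is the composite of two Markov kernels: the draw kernel `μ ↦ μ / μ(S)`, which is
measurable on nonnegative `μ` because there the positive part of `μ` is `μ` itself, and the
replacement kernel `(μ, s) ↦ (μ + ·)_* 𝓡_s`, jointly measurable because addition on `M±(S)`
is. The closure hypothesis says that the composite charges `M₀` with full mass, so pulling it back
along the measurable embedding `M₀ ↪ M±(S)` gives a Markov kernel on `M₀`.
-/

namespace MeasureTheory.SignedMeasure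

variable {S α : Type*} [MeasurableSpace S] [MeasurableSpace α]

theorem measurable_apply {B : Set S} (hB : MeasurableSet B) :
    Measurable fun μ : SignedMeasure S => μ B :=
  Measurable.of_comap_le (le_iSup₂_of_le B hB le_rfl)

theorem measurable_of_measurable_apply {f : α → SignedMeasure S}
    (h : ∀ B, MeasurableSet B → Measurable fun a => f a B) : Measurable f := by
  refine measurable_iff_comap_le.2 ?_
  simp only [signedMeasureMeasurableSpace, MeasurableSpace.comap_iSup, iSup_le_iff,
    MeasurableSpace.comap_comp]
  exact fun B hB => measurable_iff_comap_le.1 (h B hB)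

instance : MeasurableAdd₂ (SignedMeasure S) :=
  ⟨measurable_of_measurable_apply fun _ hB =>
    ((measurable_apply hB).comp measurable_fst).add ((measurable_apply hB).comp measurable_snd)⟩

end MeasureTheory.SignedMeasure

section PosOf

variable {S α : Type*} [MeasurableSpace S] [MeasurableSpace α]

instance (μ : SignedMeasure S) : IsFiniteMeasure (posOf μ) := by
  unfold posOf; infer_instance

theorem posOf_toSignedMeasure (m : Measure S) [IsFiniteMeasure m] :
    posOf m.toSignedMeasure = m := by
  have h := Measure.toJordanDecomposition_toSignedMeasure_sub (μ := m) (ν := 0)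
  rw [Measure.toSignedMeasure_zero, sub_zero] at h
  rw [posOf, h, Measure.jordanDecompositionOfToSignedMeasureSub_posPart, Measure.sub_zero]

theorem toSignedMeasure_posOf {μ : SignedMeasure S} (hμ : 0 ≤ μ) :
    (posOf μ).toSignedMeasure = μ := by
  obtain ⟨m, _, rfl⟩ : ∃ m : Measure S, ∃ _ : IsFiniteMeasure m, m.toSignedMeasure = μ :=
    ⟨_, inferInstance,
      μ.toMeasureOfZeroLE_toSignedMeasure ((VectorMeasure.le_restrict_univ_iff_le _ _).2 hμ)⟩
  ext B hB
  simp only [Measure.toSignedMeasure_apply_measurable hB, posOf_toSignedMeasure]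

theorem posOf_apply {μ : SignedMeasure S} (hμ : 0 ≤ μ) {B : Set S} (hB : MeasurableSet B) :
    posOf μ B = ENNReal.ofReal (μ B) := by
  conv_rhs => rw [← toSignedMeasure_posOf hμ]
  rw [Measure.toSignedMeasure_apply_measurable hB, measureReal_def,
    ENNReal.ofReal_toReal (measure_ne_top _ _)]

theorem posOf_ne_zero {μ : SignedMeasure S} (hμ : 0 ≤ μ) (hne : μ ≠ 0) : posOf μ ≠ 0 :=
  fun h => hne (by rw [← toSignedMeasure_posOf hμ]; simp [h])

theorem isProbabilityMeasure_drawDist {μ : SignedMeasure S} (hμ : 0 ≤ μ) (hne : μ ≠ 0) :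
    IsProbabilityMeasure (drawDist μ) :=
  have : NeZero (posOf μ) := ⟨posOf_ne_zero hμ hne⟩
  isProbabilityMeasureSMul

theorem Measurable.posOf {f : α → SignedMeasure S} (hf : Measurable f) (hf0 : ∀ a, 0 ≤ f a) :
    Measurable fun a => posOf (f a) :=
  Measure.measurable_of_measurable_coe _ fun B hB => by
    simp only [posOf_apply (hf0 _) hB]
    exact ENNReal.measurable_ofReal.comp ((SignedMeasure.measurable_apply hB).comp hf)

theorem Measurable.drawDist {f : α → SignedMeasure S} (hf : Measurable f)
    (hf0 : ∀ a, 0 ≤ f a) :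
    Measurable fun a => drawDist (f a) :=
  Measure.measurable_of_measurable_coe _ fun B hB => by
    simp only [_root_.drawDist, Measure.smul_apply, smul_eq_mul]
    have h := hf.posOf hf0
    exact ((Measure.measurable_coe .univ).comp h).inv.mul ((Measure.measurable_coe hB).comp h)

end PosOf

theorem MeasureTheory.Measure.bind_apply_eq_one {β γ : Type*} [MeasurableSpace β]
    [MeasurableSpace γ] {m : Measure β} [IsProbabilityMeasure m] {f : β → Measure γ}
    (hf : AEMeasurable f m) {B : Set γ} (hB : MeasurableSet B) (h : ∀ᵐ b ∂m, f b B = 1) :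
    m.bind f B = 1 := by
  rw [bind_apply hB hf, lintegral_congr_ae h, lintegral_one, measure_univ]

namespace ProbabilityTheory

variable {α β γ δ : Type*} [MeasurableSpace α] [MeasurableSpace β] [MeasurableSpace γ]
  [MeasurableSpace δ]

theorem Kernel.measurable_bind_map (κ : Kernel α β) [IsSFiniteKernel κ] (η : Kernel β γ)
    [IsSFiniteKernel η] {g : α → γ → δ} (hg : Measurable (Function.uncurry g)) :
    Measurable fun a => (κ a).bind fun b => (η b).map (g a) := by
  refine Measure.measurable_of_measurable_coe _ fun B hB => ?_
  have hga : ∀ a, Measurable (g a) := fun a => hg.comp measurable_prodMk_left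
  have hbind (a : α) :
      (κ a).bind (fun b => (η b).map (g a)) B = ∫⁻ b, η b (g a ⁻¹' B) ∂κ a := by
    rw [Measure.bind_apply hB (f := fun b => (η b).map (g a))
      ((Measure.measurable_map _ (hga a)).comp η.measurable).aemeasurable]
    exact lintegral_congr fun b => Measure.map_apply (hga a) hB
  simp only [hbind]
  refine Measurable.lintegral_kernel_prod_right' (κ := κ)
    (f := fun p : α × β => η p.2 (g p.1 ⁻¹' B)) ?_
  exact Kernel.measurable_kernel_prodMk_left (κ := Kernel.prodMkLeft α η)
    (t := {q : (α × β) × γ | g q.1.1 q.2 ∈ B})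
    (hB.preimage (hg.comp ((measurable_fst.comp measurable_fst).prodMk measurable_snd)))

end ProbabilityTheory

open ProbabilityTheory

theorem random_urn_with_removals_isProbabilityKernel_general (S : Type*) [MeasurableSpace S]
    (𝓡 : S → Measure (SignedMeasure S))
    (hmeas : Measurable 𝓡) (hprob : ∀ s, IsProbabilityMeasure (𝓡 s))
    (M₀ : Set (SignedMeasure S)) (hM₀ : MeasurableSet M₀)
    (hsub : ∀ μ ∈ M₀, 0 ≤ μ ∧ μ ≠ 0)
    (hclosed : ∀ μ ∈ M₀, ∀ᵐ s ∂(posOf μ),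
      𝓡 s {ν : SignedMeasure S | μ + ν ∈ M₀} = 1) :
    (∀ μ : M₀, IsProbabilityMeasure
        (Measure.comap (Subtype.val : M₀ → SignedMeasure S)
          (Measure.bind (drawDist μ.1)
            (fun s => Measure.map (fun ν => μ.1 + ν) (𝓡 s))))) ∧
    Measurable (fun μ : M₀ =>
        Measure.comap (Subtype.val : M₀ → SignedMeasure S)
          (Measure.bind (drawDist μ.1)
            (fun s => Measure.map (fun ν => μ.1 + ν) (𝓡 s)))) := by
  have hnonneg : ∀ μ : M₀, 0 ≤ μ.1 := fun μ => (hsub μ.1 μ.2).1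
  let draw : Kernel M₀ S := ⟨_, measurable_subtype_coe.drawDist hnonneg⟩
  let replace : Kernel S (SignedMeasure S) := ⟨𝓡, hmeas⟩
  have : IsMarkovKernel draw :=
    ⟨fun μ => isProbabilityMeasure_drawDist (hnonneg μ) (hsub μ.1 μ.2).2⟩
  have : IsMarkovKernel replace := ⟨hprob⟩
  let urn : Kernel M₀ (SignedMeasure S) :=
    ⟨_, draw.measurable_bind_map replace (g := fun μ ν => μ.1 + ν) (by fun_prop)⟩
  have hurn : ∀ μ : M₀, urn μ M₀ = 1 := fun μ =>
    Measure.bind_apply_eq_one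
      ((Measure.measurable_map _ (measurable_const_add μ.1)).comp hmeas).aemeasurable hM₀ <|
      (Measure.ae_smul_measure (hclosed μ.1 μ.2) _).mono fun s hs => by
        rwa [Function.comp_apply, Measure.map_apply (measurable_const_add _) hM₀]
  have hval := MeasurableEmbedding.subtype_coe hM₀
  have hmarkov := Kernel.IsMarkovKernel.comapRight urn hval
    (by simpa only [Subtype.range_coe] using hurn)
  exact ⟨hmarkov.isProbabilityMeasure, (urn.comapRight hval).measurable⟩

/-- let `S` be a standard Borel space, `𝓡 : S → P(M±(S))` a
probability kernel into the probability measures on the finite signed measures on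
`S`, and `M₀` a measurable subset of `M*(S)` (the nonzero nonnegative finite
measures, viewed inside `M±(S)`) such that for every `μ ∈ M₀` and `μ`-almost every
`s`, `𝓡_s {ν : μ + ν ∈ M₀} = 1`. For `μ ∈ M₀`, let `R_μ` be the mixture over
`s ∼ μ/μ(S)` of the pushforwards of `𝓡_s` under `ν ↦ μ + ν`, viewed (via
restriction to `M₀`) as a measure on `M₀`. Then `μ ↦ R_μ` is a probability kernel
from `M₀` to itself. -/
theorem random_urn_with_removals_isProbabilityKernel (S : Type*) [MeasurableSpace S]
    [StandardBorelSpace S]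
    (𝓡 : S → Measure (SignedMeasure S))
    (hmeas : Measurable 𝓡) (hprob : ∀ s, IsProbabilityMeasure (𝓡 s))
    (M₀ : Set (SignedMeasure S)) (hM₀ : MeasurableSet M₀)
    (hsub : ∀ μ ∈ M₀, 0 ≤ μ ∧ μ ≠ 0)
    (hclosed : ∀ μ ∈ M₀, ∀ᵐ s ∂(posOf μ),
      𝓡 s {ν : SignedMeasure S | μ + ν ∈ M₀} = 1) :
    (∀ μ : M₀, IsProbabilityMeasure
        (Measure.comap (Subtype.val : M₀ → SignedMeasure S)
          (Measure.bind (drawDist μ.1)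
            (fun s => Measure.map (fun ν => μ.1 + ν) (𝓡 s))))) ∧
    Measurable (fun μ : M₀ =>
        Measure.comap (Subtype.val : M₀ → SignedMeasure S)
          (Measure.bind (drawDist μ.1)
            (fun s => Measure.map (fun ν => μ.1 + ν) (𝓡 s)))) :=
  random_urn_with_removals_isProbabilityKernel_general S 𝓡 hmeas hprob M₀ hM₀ hsub hclosed
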